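/- Let C ∈ [0, 1/3]. The 4×4 matrix ρ with diagonal entries ((1+C)/2, (1−C+√(1−2C−3C²))/4, (1−C−√(1−2C−3C²))/4, 0), off-diagonal entries ρ₂₃ = ρ₃₂ = −C/2, and all other entries zero, is a valid two-qubit density matrix (PSD, trace 1) of rank 2 whose concurrence equals C and whose fidelity equals (1+C)/4. -/

import Mathlib

open Matrix Complex
open scoped ComplexOrder

noncomputable section

def pauli1 : Matrix (Fin 2) (Fin 2) ℂ := !![0, 1; 1, 0]
def pauli2 : Matrix (Fin 2) (Fin 2) ℂ := !![0, -Complex.I; Complex.I, 0]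
def pauli3 : Matrix (Fin 2) (Fin 2) ℂ := !![1, 0; 0, -1]
def pauli : Fin 3 → Matrix (Fin 2) (Fin 2) ℂ := ![pauli1, pauli2, pauli3]

/-- first-qubit index of a composite index, basis order |00⟩,|01⟩,|10⟩,|11⟩ -/
def q1 (i : Fin 4) : Fin 2 := ⟨i.val / 2, by omega⟩
def q2 (i : Fin 4) : Fin 2 := ⟨i.val % 2, by omega⟩
def pairIdx (a b : Fin 2) : Fin 4 := ⟨2 * a.val + b.val, by omega⟩

/-- Kronecker product of two 2×2 matrices as a 4×4 matrix. -/
def kron (A B : Matrix (Fin 2) (Fin 2) ℂ) : Matrix (Fin 4) (Fin 4) ℂ :=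
  fun i j => A (q1 i) (q1 j) * B (q2 i) (q2 j)

/-- Partial transpose on the second qubit. -/
def ptranspose (ρ : Matrix (Fin 4) (Fin 4) ℂ) : Matrix (Fin 4) (Fin 4) ℂ :=
  fun i j => ρ (pairIdx (q1 i) (q2 j)) (pairIdx (q1 j) (q2 i))

/-- the Bell state (|00⟩+|11⟩)/√2 -/
def bell : Fin 4 → ℂ := ![1 / Real.sqrt 2, 0, 0, 1 / Real.sqrt 2]

/-- ⟨ψ|ρ|ψ⟩ (real part) -/
def overlap (ρ : Matrix (Fin 4) (Fin 4) ℂ) (ψ : Fin 4 → ℂ) : ℝ :=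
  (star ψ ⬝ᵥ ρ *ᵥ ψ).re

/-- ψ is maximally entangled: ψ = (U_A ⊗ U_B)(|00⟩+|11⟩)/√2 with U_A, U_B ∈ SU(2). -/
def IsMaxEnt (ψ : Fin 4 → ℂ) : Prop :=
  ∃ UA UB : Matrix (Fin 2) (Fin 2) ℂ,
    UA ∈ Matrix.unitaryGroup (Fin 2) ℂ ∧ UB ∈ Matrix.unitaryGroup (Fin 2) ℂ ∧
    UA.det = 1 ∧ UB.det = 1 ∧ ψ = (kron UA UB) *ᵥ bell

/-- fidelity / maximal singlet fraction -/
def fid (ρ : Matrix (Fin 4) (Fin 4) ℂ) : ℝ :=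
  sSup {x : ℝ | ∃ ψ, IsMaxEnt ψ ∧ x = overlap ρ ψ}

/-- negativity N(ρ) = max(0, -2 λ_min(ρ^Γ)) -/
def negativity (ρ : Matrix (Fin 4) (Fin 4) ℂ) : ℝ :=
  max 0 (-2 * sInf {t : ℝ | (t : ℂ) ∈ spectrum ℂ (ptranspose ρ)})

def spinFlip : Matrix (Fin 4) (Fin 4) ℂ := kron pauli2 pauli2

def concMat (ρ : Matrix (Fin 4) (Fin 4) ℂ) : Matrix (Fin 4) (Fin 4) ℂ :=
  ρ * spinFlip * ρ.map (starRingEnd ℂ) * spinFlip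

/-- the λᵢ of Wootters' formula: square roots of the eigenvalues (with multiplicity)
of ρ (σy⊗σy) ρ̄ (σy⊗σy); these eigenvalues are real and nonnegative. -/
def concRoots (ρ : Matrix (Fin 4) (Fin 4) ℂ) : Multiset ℝ :=
  (concMat ρ).charpoly.roots.map (fun z => Real.sqrt z.re)

/-- concurrence C = max(0, λ₁-λ₂-λ₃-λ₄) = max(0, 2 max λᵢ - ∑ λᵢ) -/
def concurrence (ρ : Matrix (Fin 4) (Fin 4) ℂ) : ℝ :=
  max 0 (2 * (concRoots ρ).fold max 0 - (concRoots ρ).sum)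


open Polynomial

set_option maxHeartbeats 1600000

@[simp] lemma q1_0 : q1 0 = 0 := rfl
@[simp] lemma q1_1 : q1 1 = 0 := rfl
@[simp] lemma q1_2 : q1 2 = 1 := rfl
@[simp] lemma q1_3 : q1 3 = 1 := rfl
@[simp] lemma q2_0 : q2 0 = 0 := rfl
@[simp] lemma q2_1 : q2 1 = 1 := rfl
@[simp] lemma q2_2 : q2 2 = 0 := rfl
@[simp] lemma q2_3 : q2 3 = 1 := rfl

def rhoC (C : ℝ) : Matrix (Fin 4) (Fin 4) ℂ :=
  !![((1+C)/2 : ℝ), 0, 0, 0;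
     0, ((1 - C + Real.sqrt (1 - 2*C - 3*C^2))/4 : ℝ), (-C/2 : ℝ), 0;
     0, (-C/2 : ℝ), ((1 - C - Real.sqrt (1 - 2*C - 3*C^2))/4 : ℝ), 0;
     0, 0, 0, 0]

def Amat (C : ℝ) : Matrix (Fin 2) (Fin 4) ℂ :=
  !![(Real.sqrt ((1+C)/2) : ℝ), 0, 0, 0;
     0, (Real.sqrt ((1 - C + Real.sqrt (1 - 2*C - 3*C^2))/4) : ℝ),
       -(Real.sqrt ((1 - C - Real.sqrt (1 - 2*C - 3*C^2))/4) : ℝ), 0]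

lemma sqrt_facts (C : ℝ) (hC0 : 0 ≤ C) (hC : C ≤ 1/3) :
    0 ≤ 1 - 2*C - 3*C^2 ∧ Real.sqrt (1 - 2*C - 3*C^2) ≤ 1 - C ∧
      ((1 - C + Real.sqrt (1 - 2*C - 3*C^2))/4) * ((1 - C - Real.sqrt (1 - 2*C - 3*C^2))/4)
        = C^2/4 := by
  have h1 : 0 ≤ 1 - 2*C - 3*C^2 := by nlinarith
  have h2 : Real.sqrt (1 - 2*C - 3*C^2) ≤ 1 - C := by
    rw [show (1 - C) = Real.sqrt ((1-C)^2) by rw [Real.sqrt_sq (by linarith)]]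
    exact Real.sqrt_le_sqrt (by nlinarith)
  have h3 := Real.sq_sqrt h1
  exact ⟨h1, h2, by linear_combination (-(1:ℝ)/16) * h3⟩

lemma rho_eq (C : ℝ) (hC0 : 0 ≤ C) (hC : C ≤ 1/3) : rhoC C = (Amat C)ᴴ * (Amat C) := by
  obtain ⟨h1, h2, h3⟩ := sqrt_facts C hC0 hC
  set s := Real.sqrt (1 - 2*C - 3*C^2) with hsdef
  have hs : 0 ≤ s := Real.sqrt_nonneg _
  have hb : (0:ℝ) ≤ (1 - C + s)/4 := by nlinarith
  have hd : (0:ℝ) ≤ (1 - C - s)/4 := by nlinarith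
  have ha : (0:ℝ) ≤ (1+C)/2 := by nlinarith
  have e1 : Real.sqrt ((1+C)/2) * Real.sqrt ((1+C)/2) = (1+C)/2 := Real.mul_self_sqrt ha
  have e2 : Real.sqrt ((1-C+s)/4) * Real.sqrt ((1-C+s)/4) = (1-C+s)/4 := Real.mul_self_sqrt hb
  have e3 : Real.sqrt ((1-C-s)/4) * Real.sqrt ((1-C-s)/4) = (1-C-s)/4 := Real.mul_self_sqrt hd
  have e4 : Real.sqrt ((1-C+s)/4) * Real.sqrt ((1-C-s)/4) = C/2 := by
    rw [← Real.sqrt_mul hb, h3]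
    rw [show (C^2/4 : ℝ) = (C/2)^2 by ring, Real.sqrt_sq (by linarith)]
  have e4' : Real.sqrt ((1-C-s)/4) * Real.sqrt ((1-C+s)/4) = C/2 := by
    rw [mul_comm]; exact e4
  ext i j
  fin_cases i <;> fin_cases j <;>
    simp [-Real.sqrt_div, -Real.sqrt_div', rhoC, Amat, Matrix.mul_apply, Fin.sum_univ_two,
      Matrix.conjTranspose_apply, Complex.conj_ofReal, ← Complex.ofReal_mul, ← hsdef,
      ← Complex.ofReal_neg, e1, e2, e3, e4, e4', Matrix.vecHead, Matrix.vecTail] <;>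
    (try norm_cast) <;> try ring
  all_goals (push_cast; ring)

lemma rho_psd (C : ℝ) (hC0 : 0 ≤ C) (hC : C ≤ 1/3) : (rhoC C).PosSemidef := by
  rw [rho_eq C hC0 hC]; exact Matrix.posSemidef_conjTranspose_mul_self _

lemma rho_trace (C : ℝ) : (rhoC C).trace = 1 := by
  have : (rhoC C).trace = (((1+C)/2 : ℝ) : ℂ) + (((1 - C + Real.sqrt (1 - 2*C - 3*C^2))/4 : ℝ) : ℂ)
      + (((1 - C - Real.sqrt (1 - 2*C - 3*C^2))/4 : ℝ) : ℂ) + 0 := by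
    simp [rhoC, Matrix.trace, Matrix.diag, Fin.sum_univ_four, Matrix.vecHead, Matrix.vecTail]
  rw [this]
  push_cast
  ring

lemma rho_rank (C : ℝ) (hC0 : 0 ≤ C) (hC : C ≤ 1/3) : (rhoC C).rank = 2 := by
  obtain ⟨h1, h2, h3⟩ := sqrt_facts C hC0 hC
  rw [rho_eq C hC0 hC, Matrix.rank_conjTranspose_mul_self]
  have hb : (0:ℝ) < (1 - C + Real.sqrt (1 - 2*C - 3*C^2))/4 := by
    nlinarith [Real.sqrt_nonneg (1 - 2*C - 3*C^2)]
  have ha : (0:ℝ) < (1+C)/2 := by nlinarith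
  have := LinearIndependent.rank_matrix (R := ℂ) (M := Amat C) ?_
  · rw [this]; simp
  · rw [show Amat C = ![![((Real.sqrt ((1+C)/2) : ℝ) : ℂ), 0, 0, 0],
      ![0, ((Real.sqrt ((1 - C + Real.sqrt (1 - 2*C - 3*C^2))/4) : ℝ) : ℂ),
        -((Real.sqrt ((1 - C - Real.sqrt (1 - 2*C - 3*C^2))/4) : ℝ) : ℂ), 0]]
      from rfl]
    rw [linearIndependent_fin2]
    constructor
    · intro h
      have := congrFun h 1
      simp [-Real.sqrt_div, -Real.sqrt_div', Matrix.row] at this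
      exact (Real.sqrt_pos.mpr hb).ne' (by exact_mod_cast this)
    · intro c h
      have := congrFun h 0
      simp [-Real.sqrt_div, -Real.sqrt_div', Matrix.row] at this
      exact (Real.sqrt_pos.mpr ha).ne' (by exact_mod_cast this.symm)

lemma su2_form (U : Matrix (Fin 2) (Fin 2) ℂ) (hU : U ∈ Matrix.unitaryGroup (Fin 2) ℂ)
    (hdet : U.det = 1) :
    U 1 1 = starRingEnd ℂ (U 0 0) ∧ U 1 0 = -starRingEnd ℂ (U 0 1) ∧
      U 0 0 * starRingEnd ℂ (U 0 0) + U 0 1 * starRingEnd ℂ (U 0 1) = 1 := by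
  rw [Matrix.mem_unitaryGroup_iff] at hU
  have h00 := congrFun (congrFun hU 0) 0
  have h01 := congrFun (congrFun hU 0) 1
  have h10 := congrFun (congrFun hU 1) 0
  rw [Matrix.det_fin_two] at hdet
  simp [Matrix.mul_apply, Fin.sum_univ_two, Matrix.star_apply, Matrix.one_apply] at h00 h01 h10
  have e2 : starRingEnd ℂ (U 0 0) * U 1 0 + starRingEnd ℂ (U 0 1) * U 1 1 = 0 := by
    have := congrArg (starRingEnd ℂ) h01
    simpa [mul_comm] using this
  refine ⟨?_, ?_, ?_⟩
  · linear_combination (-(U 1 1)) * h00 + (starRingEnd ℂ (U 0 0)) * hdet + (U 0 1) * e2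
  · linear_combination (-(U 1 0)) * h00 + (U 0 0) * h10 - (starRingEnd ℂ (U 0 1)) * hdet
  · linear_combination h00

lemma overlap_eq (C : ℝ) (α β : ℂ) :
    overlap (rhoC C) ![α/Real.sqrt 2, β/Real.sqrt 2,
        -(starRingEnd ℂ β)/Real.sqrt 2, (starRingEnd ℂ α)/Real.sqrt 2]
      = (1+C)/4 * Complex.normSq α + (1-C)/4 * Complex.normSq β
        + (C/2) * (β.re^2 - β.im^2) := by
  have h2 : (Real.sqrt 2) * (Real.sqrt 2) = 2 := Real.mul_self_sqrt (by norm_num)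
  have h2' : (Real.sqrt 2 : ℝ) ≠ 0 := by positivity
  simp only [overlap, rhoC, dotProduct, mulVec, Fin.sum_univ_four]
  simp only [Matrix.cons_val', Matrix.cons_val_zero, Matrix.cons_val_one, Matrix.head_cons,
    Matrix.empty_val', Matrix.cons_val_fin_one, Matrix.head_fin_const, Matrix.cons_val_two,
    Matrix.cons_val_three, Matrix.tail_cons, Pi.star_apply, Matrix.cons_val_succ,
    Matrix.of_apply, star_div₀, star_neg, RCLike.star_def]
  simp [Complex.ext_iff, Complex.div_re, Complex.div_im, Complex.normSq, mul_comm, mul_assoc,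
    mul_left_comm]
  ring_nf
  rw [Real.sq_sqrt (by norm_num : (0:ℝ) ≤ 2)]
  ring

lemma maxent_form (ψ : Fin 4 → ℂ) (h : IsMaxEnt ψ) :
    ∃ α β : ℂ, Complex.normSq α + Complex.normSq β = 1 ∧
      ψ = ![α/Real.sqrt 2, β/Real.sqrt 2,
        -(starRingEnd ℂ β)/Real.sqrt 2, (starRingEnd ℂ α)/Real.sqrt 2] := by
  obtain ⟨UA, UB, hUA, hUB, hdA, hdB, hψ⟩ := h
  obtain ⟨a11, a10, anorm⟩ := su2_form UA hUA hdA
  obtain ⟨b11, b10, bnorm⟩ := su2_form UB hUB hdB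
  set p := UA 0 0; set q := UA 0 1; set u := UB 0 0; set v := UB 0 1
  refine ⟨p*u + q*v, q * starRingEnd ℂ u - p * starRingEnd ℂ v, ?_, ?_⟩
  · have key : (p*u + q*v) * starRingEnd ℂ (p*u + q*v)
        + (q * starRingEnd ℂ u - p * starRingEnd ℂ v) *
          starRingEnd ℂ (q * starRingEnd ℂ u - p * starRingEnd ℂ v) = 1 := by
      simp only [_root_.map_add, _root_.map_mul, _root_.map_sub, Complex.conj_conj]
      linear_combination (u * starRingEnd ℂ u + v * starRingEnd ℂ v) * anorm + bnorm
    rw [Complex.mul_conj, Complex.mul_conj] at key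
    exact_mod_cast key
  · rw [hψ]
    funext i
    fin_cases i <;>
      simp [kron, bell, mulVec, dotProduct, Fin.sum_univ_four, a11, a10, b11, b10,
        Fin.isValue, div_eq_mul_inv] <;> ring

lemma fid_bound (C : ℝ) (hC0 : 0 ≤ C) (ψ : Fin 4 → ℂ) (h : IsMaxEnt ψ) :
    overlap (rhoC C) ψ ≤ (1+C)/4 := by
  obtain ⟨α, β, hnorm, hψ⟩ := maxent_form ψ h
  rw [hψ, overlap_eq]
  have h1 : Complex.normSq α = α.re^2 + α.im^2 := by rw [Complex.normSq_apply]; ring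
  have h2 : Complex.normSq β = β.re^2 + β.im^2 := by rw [Complex.normSq_apply]; ring
  rw [h1, h2] at hnorm ⊢
  nlinarith [sq_nonneg β.im, sq_nonneg α.re, sq_nonneg α.im]

lemma fid_val (C : ℝ) (hC0 : 0 ≤ C) : fid (rhoC C) = (1+C)/4 := by
  have hmem : (1+C)/4 ∈ {x : ℝ | ∃ ψ, IsMaxEnt ψ ∧ x = overlap (rhoC C) ψ} := by
    refine ⟨![(0:ℂ)/Real.sqrt 2, 1/Real.sqrt 2,
        -(starRingEnd ℂ 1)/Real.sqrt 2, (starRingEnd ℂ 0)/Real.sqrt 2], ?_, ?_⟩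
    · refine ⟨!![0, 1; -1, 0], 1, ?_, ?_, ?_, ?_, ?_⟩
      · rw [Matrix.mem_unitaryGroup_iff]
        ext i j
        fin_cases i <;> fin_cases j <;>
          simp [Matrix.mul_apply, Fin.sum_univ_two, Matrix.star_apply, Matrix.one_apply]
      · exact one_mem _
      · simp [Matrix.det_fin_two]
      · simp
      · funext i
        fin_cases i <;>
          simp [kron, bell, mulVec, dotProduct, Fin.sum_univ_four, Matrix.one_apply] <;>
          try ring
    · rw [overlap_eq]
      simp
      ring
  refine le_antisymm (csSup_le ⟨_, hmem⟩ ?_) (le_csSup ⟨(1+C)/4, ?_⟩ hmem)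
  · rintro x ⟨ψ, hψ, rfl⟩
    exact fid_bound C hC0 ψ hψ
  · rintro x ⟨ψ, hψ, rfl⟩
    exact fid_bound C hC0 ψ hψ

lemma spinFlip_eq : spinFlip = !![0,0,0,-1; 0,0,1,0; 0,1,0,0; -1,0,0,0] := by
  ext i j
  fin_cases i <;> fin_cases j <;>
    simp [spinFlip, kron, pauli2, q1, q2, Matrix.vecHead, Matrix.vecTail] <;>
    try (ring_nf; simp [Complex.I_sq])

lemma concMat_eq (C : ℝ) (hC0 : 0 ≤ C) (hC : C ≤ 1/3) :
    concMat (rhoC C) =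
      !![0,0,0,0;
         0, ((C^2/2 : ℝ) : ℂ), ((-(C*((1 - C + Real.sqrt (1 - 2*C - 3*C^2))/4)) : ℝ) : ℂ), 0;
         0, ((-(C*((1 - C - Real.sqrt (1 - 2*C - 3*C^2))/4)) : ℝ) : ℂ), ((C^2/2 : ℝ) : ℂ), 0;
         0,0,0,0] := by
  have h1 : (0:ℝ) ≤ 1 - 2*C - 3*C^2 := by nlinarith
  have h3 := Real.sq_sqrt h1
  have h3c : ((Real.sqrt (1 - 2*C - 3*C^2) : ℝ) : ℂ)^2 = 1 - 2*(C:ℂ) - 3*(C:ℂ)^2 := by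
    exact_mod_cast congrArg (fun t : ℝ => (t : ℂ)) h3
  have hmap : (rhoC C).map (starRingEnd ℂ) = rhoC C := by
    ext i j
    fin_cases i <;> fin_cases j <;>
      simp [rhoC, Matrix.map_apply, Complex.conj_ofReal, Matrix.vecHead, Matrix.vecTail,
        map_ofNat]
  rw [concMat, hmap, spinFlip_eq]
  ext i j
  fin_cases i <;> fin_cases j <;>
    simp [-Real.sqrt_div, -Real.sqrt_div', rhoC, Matrix.mul_apply, Fin.sum_univ_four,
      Matrix.vecHead, Matrix.vecTail] <;>
    (try push_cast) <;> first | linear_combination (-(1:ℂ)/16) * h3c | ring1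

lemma cp4 (e f g : ℂ) :
    (!![(0:ℂ),0,0,0; 0,e,f,0; 0,g,e,0; 0,0,0,0]).charpoly
      = X^2 * ((X - Polynomial.C e)^2 - Polynomial.C f * Polynomial.C g) := by
  rw [Matrix.charpoly]
  simp [Matrix.det_succ_row_zero, Fin.sum_univ_succ, Matrix.charmatrix_apply,
    Matrix.one_apply, Matrix.diagonal_apply, Matrix.vecHead, Matrix.vecTail,
    Fin.succAbove, Matrix.submatrix_apply, Fin.val_succ]
  ring

lemma charpoly_eq (C : ℝ) (hC0 : 0 ≤ C) (hC : C ≤ 1/3) :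
    (concMat (rhoC C)).charpoly = X^3 * (X - Polynomial.C ((C:ℝ)^2 : ℂ)) := by
  have h1 : (0:ℝ) ≤ 1 - 2*C - 3*C^2 := by nlinarith
  have h3 := Real.sq_sqrt h1
  rw [concMat_eq C hC0 hC, cp4]
  have hb : Polynomial.C (((-(C*((1 - C + Real.sqrt (1 - 2*C - 3*C^2))/4))) : ℝ) : ℂ) *
      Polynomial.C (((-(C*((1 - C - Real.sqrt (1 - 2*C - 3*C^2))/4))) : ℝ) : ℂ)
      = (Polynomial.C (((C^2/2 : ℝ) : ℂ)))^2 := by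
    rw [← _root_.map_mul, ← _root_.map_pow]
    congr 1
    have h3c : ((Real.sqrt (1 - 2*C - 3*C^2) : ℝ) : ℂ)^2 = 1 - 2*(C:ℂ) - 3*(C:ℂ)^2 := by
      exact_mod_cast congrArg (fun t : ℝ => (t : ℂ)) h3
    push_cast
    linear_combination (-(C:ℂ)^2/16) * h3c
  have h2 : Polynomial.C (((C^2/2 : ℝ) : ℂ)) * 2 = Polynomial.C ((C:ℝ)^2 : ℂ) := by
    rw [show ((2:ℂ[X])) = Polynomial.C 2 from (map_ofNat Polynomial.C 2).symm, ← _root_.map_mul]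
    congr 1
    push_cast
    ring
  linear_combination (-(X:ℂ[X])^2) * hb - (X:ℂ[X])^3 * h2

lemma conc_val (C : ℝ) (hC0 : 0 ≤ C) (hC : C ≤ 1/3) : concurrence (rhoC C) = C := by
  have hroots : (concMat (rhoC C)).charpoly.roots = 3 • {(0:ℂ)} + {((C:ℝ)^2 : ℂ)} := by
    rw [charpoly_eq C hC0 hC]
    rw [Polynomial.roots_mul (by
      apply mul_ne_zero
      · exact pow_ne_zero _ Polynomial.X_ne_zero
      · exact Polynomial.X_sub_C_ne_zero _)]
    rw [Polynomial.roots_pow, Polynomial.roots_X, Polynomial.roots_X_sub_C]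
  have hcr : concRoots (rhoC C) = 0 ::ₘ 0 ::ₘ 0 ::ₘ {C} := by
    rw [concRoots, hroots]
    rw [show (3 • {(0:ℂ)} + {((C:ℝ)^2 : ℂ)} : Multiset ℂ)
        = (0 ::ₘ 0 ::ₘ 0 ::ₘ {((C:ℝ)^2 : ℂ)}) from rfl]
    simp only [Multiset.map_cons, Multiset.map_singleton]
    have f0 : Real.sqrt ((0:ℂ)).re = 0 := by simp
    have fc : Real.sqrt (((C:ℝ)^2 : ℂ)).re = C := by
      have : (((C:ℝ)^2 : ℂ)).re = C^2 := by
        rw [show ((C:ℝ)^2 : ℂ) = ((C^2 : ℝ) : ℂ) by push_cast; ring, Complex.ofReal_re]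
      rw [this, Real.sqrt_sq hC0]
    rw [f0, fc]
  rw [concurrence, hcr]
  simp only [Multiset.fold_cons_left, Multiset.fold_singleton, Multiset.sum_cons,
    Multiset.sum_singleton]
  rw [max_comm C 0]
  rw [show max 0 (max 0 (max 0 (max 0 C))) = C by
    rw [max_eq_right hC0, max_eq_right hC0, max_eq_right hC0, max_eq_right hC0]]
  rw [show (2*C - (0 + (0 + (0 + C)))) = C by ring, max_eq_right hC0]


/-- The explicit rank-2 state minimizing the fidelity for concurrence C ≤ 1/3:
it is a density matrix of rank 2 with concurrence C and fidelity (1+C)/4. -/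
theorem minimal_fidelity_state_small_C
    (C : ℝ) (hC0 : 0 ≤ C) (hC : C ≤ 1/3) :
    let ρ : Matrix (Fin 4) (Fin 4) ℂ :=
      !![((1+C)/2 : ℝ), 0, 0, 0;
         0, ((1 - C + Real.sqrt (1 - 2*C - 3*C^2))/4 : ℝ), (-C/2 : ℝ), 0;
         0, (-C/2 : ℝ), ((1 - C - Real.sqrt (1 - 2*C - 3*C^2))/4 : ℝ), 0;
         0, 0, 0, 0]
    ρ.PosSemidef ∧ ρ.trace = 1 ∧ ρ.rank = 2 ∧ concurrence ρ = C ∧ fid ρ = (1+C)/4 := by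
  intro ρ
  have hρ : ρ = rhoC C := rfl
  rw [hρ]
  exact ⟨rho_psd C hC0 hC, rho_trace C, rho_rank C hC0 hC, conc_val C hC0 hC, fid_val C hC0⟩
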